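/- arXiv:2108.02908 — 7 statements merged into one kernel-verified Lean document; each statement's English description precedes it below -/
import Mathlib

section
/- Let X be a real Banach space. Then X has the Ball Dentable Property (BDP) if and only if the bidual X** has the w*-Ball Dentable Property (w*-BDP), i.e. the closed unit ball of X** admits weak*-slices (slices determined by norm-one elements of X*) of arbitrarily small diameter. -/
open Metric Topology Pointwise ENNReal

noncomputable section

/-- The slice `S(B_X, f, α) = {x ∈ B_X : f x > 1 - α}` of the closed unit ball of `X`
determined by the functional `f` and `α`. -/
def ballSlice (X : Type*) [NormedAddCommGroup X] [NormedSpace ℝ X]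
    (f : X →L[ℝ] ℝ) (α : ℝ) : Set X :=
  {x | x ∈ closedBall (0 : X) 1 ∧ 1 - α < f x}

/-- `X` has the Ball Dentable Property: the closed unit ball has slices (determined by
norm-one functionals) of arbitrarily small diameter. -/
def BDP (X : Type*) [NormedAddCommGroup X] [NormedSpace ℝ X] : Prop :=
  ∀ ε > (0 : ℝ), ∃ f : X →L[ℝ] ℝ, ‖f‖ = 1 ∧ ∃ α > (0 : ℝ), diam (ballSlice X f α) < ε

/-- The weak topology on `X`: the coarsest topology making all continuous linear
functionals continuous. -/
def weakTop (X : Type*) [NormedAddCommGroup X] [NormedSpace ℝ X] : TopologicalSpace X :=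
  ⨅ f : X →L[ℝ] ℝ, TopologicalSpace.induced f inferInstance

/-- `X` has the Ball Huskable Property: the closed unit ball has nonempty relatively
weakly open subsets of arbitrarily small diameter. -/
def BHP (X : Type*) [NormedAddCommGroup X] [NormedSpace ℝ X] : Prop :=
  ∀ ε > (0 : ℝ), ∃ V : Set X, IsOpen[weakTop X] V ∧
    (V ∩ closedBall (0 : X) 1).Nonempty ∧ diam (V ∩ closedBall (0 : X) 1) < ε

/-- `X` has the Ball Small Combination of Slices Property: there are finite convex
combinations of slices of the closed unit ball of arbitrarily small diameter. -/
def BSCSP (X : Type*) [NormedAddCommGroup X] [NormedSpace ℝ X] : Prop :=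
  ∀ ε > (0 : ℝ), ∃ (n : ℕ) (f : Fin n → X →L[ℝ] ℝ) (α lam : Fin n → ℝ),
    (∀ i, ‖f i‖ = 1) ∧ (∀ i, 0 < α i) ∧ (∀ i, 0 ≤ lam i) ∧ (∑ i, lam i = 1) ∧
    diam (∑ i, lam i • ballSlice X (f i) (α i)) < ε

/-- The weak* ballSlice `{g ∈ B_{E*} : g e > 1 - α}` of the closed unit ball of the dual of `E`
determined by `e : E` and `α`. -/
def wstarSlice (E : Type*) [NormedAddCommGroup E] [NormedSpace ℝ E]
    (e : E) (α : ℝ) : Set (E →L[ℝ] ℝ) :=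
  {g | g ∈ closedBall (0 : E →L[ℝ] ℝ) 1 ∧ 1 - α < g e}

/-- The dual of `E` has the w*-Ball Dentable Property: the closed unit ball of `E*` has
weak* slices (determined by norm-one elements of `E`) of arbitrarily small diameter. -/
def wstarBDP (E : Type*) [NormedAddCommGroup E] [NormedSpace ℝ E] : Prop :=
  ∀ ε > (0 : ℝ), ∃ e : E, ‖e‖ = 1 ∧ ∃ α > (0 : ℝ), diam (wstarSlice E e α) < ε

/-- The weak* topology `σ(E*, E)` on the dual of `E`. -/
def wstarTop (E : Type*) [NormedAddCommGroup E] [NormedSpace ℝ E] :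
    TopologicalSpace (E →L[ℝ] ℝ) :=
  ⨅ e : E, TopologicalSpace.induced (fun g : E →L[ℝ] ℝ => g e) inferInstance

/-- The dual of `E` has the w*-Ball Huskable Property: the closed unit ball of `E*` has
nonempty relatively weak*-open subsets of arbitrarily small diameter. -/
def wstarBHP (E : Type*) [NormedAddCommGroup E] [NormedSpace ℝ E] : Prop :=
  ∀ ε > (0 : ℝ), ∃ V : Set (E →L[ℝ] ℝ), IsOpen[wstarTop E] V ∧
    (V ∩ closedBall (0 : E →L[ℝ] ℝ) 1).Nonempty ∧
    diam (V ∩ closedBall (0 : E →L[ℝ] ℝ) 1) < ε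

/-- The dual of `E` has the w*-Ball Small Combination of Slices Property: there are finite
convex combinations of weak* slices of the closed unit ball of `E*` of arbitrarily small
diameter. -/
def wstarBSCSP (E : Type*) [NormedAddCommGroup E] [NormedSpace ℝ E] : Prop :=
  ∀ ε > (0 : ℝ), ∃ (n : ℕ) (e : Fin n → E) (α lam : Fin n → ℝ),
    (∀ i, ‖e i‖ = 1) ∧ (∀ i, 0 < α i) ∧ (∀ i, 0 ≤ lam i) ∧ (∑ i, lam i = 1) ∧
    diam (∑ i, lam i • wstarSlice E (e i) (α i)) < ε

/-!
The canonical embedding `X → X**` is an isometry mapping the slice `S(B_X, f, α)` into the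
w*-slice of `B_{X**}` given by the same `f`, so the slice of `B_X` is no larger. Conversely, by
Goldstine's theorem the w*-slice lies in the weak* closure of the image of `S(B_X, f, α)`; since
evaluation at `h ∈ X*` is weak* continuous, `|F h - G h| ≤ ‖h‖ · diam S(B_X, f, α)` for `F, G`
in the w*-slice. Hence both slices have the same diameter.
-/

open NormedSpace Set Bornology

section WeakDual

variable {Y : Type*} [NormedAddCommGroup Y] [NormedSpace ℝ Y]

instance : LocallyConvexSpace ℝ (WeakDual ℝ Y) :=
  inferInstanceAs (LocallyConvexSpace ℝ (WeakBilin (topDualPairing ℝ Y)))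

theorem WeakDual.exists_eq_eval (φ : StrongDual ℝ (WeakDual ℝ Y)) :
    ∃ y : Y, ∀ G : WeakDual ℝ Y, φ G = G y := by
  obtain ⟨y, rfl⟩ := LinearMap.dualEmbedding_surjective (topDualPairing ℝ Y) φ
  exact ⟨y, fun _ => rfl⟩

end WeakDual

section Bidual

variable {X : Type*} [NormedAddCommGroup X] [NormedSpace ℝ X]

def NormedSpace.inclusionInWeakBidual : X →ₗ[ℝ] WeakDual ℝ (StrongDual ℝ X) :=
  StrongDual.toWeakDual.toLinearMap ∘ₗ (inclusionInDoubleDual ℝ X).toLinearMap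

@[simp]
theorem NormedSpace.inclusionInWeakBidual_apply (x : X) (f : StrongDual ℝ X) :
    inclusionInWeakBidual x f = f x :=
  rfl

theorem ContinuousLinearMap.opNorm_le_of_forall_closedBall_lt {f : StrongDual ℝ X} {u : ℝ}
    (hf : ∀ x ∈ closedBall (0 : X) 1, f x < u) : ‖f‖ ≤ u := by
  have hu : 0 ≤ u := by simpa using (hf 0 (mem_closedBall_self zero_le_one)).le
  refine f.opNorm_le_of_unit_norm hu fun x hx => abs_le.2 ⟨?_, (hf x (by simp [hx])).le⟩
  have := hf (-x) (by simp [hx])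
  rw [map_neg] at this
  linarith

/-- Goldstine's theorem. -/
theorem NormedSpace.mem_closure_inclusionInWeakBidual_closedBall
    {F : StrongDual ℝ (StrongDual ℝ X)} (hF : ‖F‖ ≤ 1) :
    StrongDual.toWeakDual F ∈ closure (inclusionInWeakBidual '' closedBall (0 : X) 1) := by
  by_contra hFK
  obtain ⟨φ, u, hKu, huF⟩ := geometric_hahn_banach_closed_point
    ((convex_closedBall (0 : X) 1).linear_image inclusionInWeakBidual).closure
    isClosed_closure hFK
  obtain ⟨h, hh⟩ := WeakDual.exists_eq_eval φ
  have hhu : ‖h‖ ≤ u := ContinuousLinearMap.opNorm_le_of_forall_closedBall_lt fun x hx => by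
    simpa [hh] using hKu _ (subset_closure (mem_image_of_mem _ hx))
  have hFh : F h ≤ u := calc
    F h ≤ ‖F‖ * ‖h‖ := (le_abs_self _).trans (F.le_opNorm h)
    _ ≤ 1 * u := mul_le_mul hF hhu (norm_nonneg _) zero_le_one
    _ = u := one_mul u
  exact (huF.trans_le (by simpa [hh] using hFh)).false

theorem NormedSpace.norm_sub_le_diam_of_mem_closure_inclusionInWeakBidual {S : Set X}
    (hS : IsBounded S) {F G : StrongDual ℝ (StrongDual ℝ X)}
    (hF : StrongDual.toWeakDual F ∈ closure (inclusionInWeakBidual '' S))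
    (hG : StrongDual.toWeakDual G ∈ closure (inclusionInWeakBidual '' S)) :
    ‖F - G‖ ≤ diam S := by
  refine (F - G).opNorm_le_bound diam_nonneg fun h => ?_
  have hmaps : MapsTo (fun P : WeakDual ℝ (StrongDual ℝ X) => P h)
      (closure (inclusionInWeakBidual '' S)) (closure (h '' S)) := by
    refine MapsTo.closure ?_ (WeakDual.eval_continuous h)
    rintro _ ⟨x, hx, rfl⟩
    exact mem_image_of_mem _ hx
  have hbdd : IsBounded (h '' S) := h.lipschitz.isBounded_image hS
  calc ‖(F - G) h‖ = dist (F h) (G h) := (dist_eq_norm _ _).symm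
    _ ≤ diam (closure (h '' S)) := dist_le_diam_of_mem hbdd.closure (hmaps hF) (hmaps hG)
    _ = diam (h '' S) := diam_closure _
    _ ≤ ‖h‖₊ * diam S := h.lipschitz.diam_image_le S hS
    _ = diam S * ‖h‖ := mul_comm _ _

theorem wstarSlice_subset_closure_image_ballSlice (f : StrongDual ℝ X) (α : ℝ) :
    StrongDual.toWeakDual '' wstarSlice (StrongDual ℝ X) f α ⊆
      closure (inclusionInWeakBidual '' ballSlice X f α) := by
  rintro _ ⟨F, ⟨hF, hFf⟩, rfl⟩
  have hopen : IsOpen {G : WeakDual ℝ (StrongDual ℝ X) | 1 - α < G f} :=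
    isOpen_lt continuous_const (WeakDual.eval_continuous f)
  refine hopen.inter_closure ⟨hFf, mem_closure_inclusionInWeakBidual_closedBall
    (mem_closedBall_zero_iff.1 hF)⟩ |> closure_mono ?_
  rintro _ ⟨hx, x, hxB, rfl⟩
  exact ⟨x, ⟨hxB, hx⟩, rfl⟩

theorem diam_wstarSlice_le_diam_ballSlice (f : StrongDual ℝ X) (α : ℝ) :
    diam (wstarSlice (StrongDual ℝ X) f α) ≤ diam (ballSlice X f α) := by
  refine diam_le_of_forall_dist_le diam_nonneg fun F hF G hG => ?_
  rw [dist_eq_norm]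
  exact norm_sub_le_diam_of_mem_closure_inclusionInWeakBidual
    (isBounded_closedBall.subset fun _ hx => hx.1)
    (wstarSlice_subset_closure_image_ballSlice f α (mem_image_of_mem _ hF))
    (wstarSlice_subset_closure_image_ballSlice f α (mem_image_of_mem _ hG))

theorem diam_ballSlice_le_diam_wstarSlice (f : StrongDual ℝ X) (α : ℝ) :
    diam (ballSlice X f α) ≤ diam (wstarSlice (StrongDual ℝ X) f α) := by
  rw [← (inclusionInDoubleDualLi ℝ (E := X)).diam_image]
  refine diam_mono ?_ (isBounded_closedBall.subset fun _ hF => hF.1)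
  rintro _ ⟨x, ⟨hx, hfx⟩, rfl⟩
  refine ⟨?_, hfx⟩
  rwa [mem_closedBall_zero_iff, LinearIsometry.norm_map, ← mem_closedBall_zero_iff]

end Bidual

theorem statement0_general (X : Type*) [NormedAddCommGroup X] [NormedSpace ℝ X] :
    BDP X ↔ wstarBDP (X →L[ℝ] ℝ) := by
  constructor
  · intro hX ε hε
    obtain ⟨f, hf, α, hα, hdiam⟩ := hX ε hε
    exact ⟨f, hf, α, hα, (diam_wstarSlice_le_diam_ballSlice f α).trans_lt hdiam⟩
  · intro hX ε hε
    obtain ⟨f, hf, α, hα, hdiam⟩ := hX ε hε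
    exact ⟨f, hf, α, hα, (diam_ballSlice_le_diam_wstarSlice f α).trans_lt hdiam⟩

/-- A Banach space `X` has `BDP` iff its bidual `X**` has `w*-BDP`. -/
theorem statement0 (X : Type*) [NormedAddCommGroup X] [NormedSpace ℝ X] [CompleteSpace X] :
    BDP X ↔ wstarBDP (X →L[ℝ] ℝ) :=
  statement0_general X
end
end

section
/- Let X be a real Banach space. Then X has the Ball Huskable Property (BHP) if and only if the bidual X** has the w*-Ball Huskable Property (w*-BHP), i.e. for every ε > 0 the closed unit ball of X** has a nonempty relatively weak*-open subset of diameter less than ε. -/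
open Metric Topology Pointwise ENNReal

noncomputable section

/-!
The canonical embedding `J : X → X**` is an isometry, and the weak topology of `X` is the
topology induced through `J` by the weak* topology of `X**`; so the relatively weakly open
subsets of `B_X` are exactly the sets `J⁻¹ W ∩ B_X` with `W` weak*-open. By Goldstine's
theorem `J(B_X)` is weak*-dense in `B_{X**}`, hence `W ∩ B_{X**}` lies in the weak*-closure of
`J(J⁻¹ W ∩ B_X)`, and taking a weak*-closure does not increase diameters because norm-closed
balls of a dual space are weak*-closed. So `J⁻¹ W ∩ B_X` and `W ∩ B_{X**}` are nonempty together and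
have equal diameters.
-/

open Set NormedSpace

theorem weakTop_eq_induced (X : Type*) [NormedAddCommGroup X] [NormedSpace ℝ X] :
    weakTop X = TopologicalSpace.induced (fun x (f : X →L[ℝ] ℝ) => f x) Pi.topologicalSpace := by
  rw [induced_to_pi]; rfl

theorem wstarTop_eq_induced (E : Type*) [NormedAddCommGroup E] [NormedSpace ℝ E] :
    wstarTop E = TopologicalSpace.induced (fun (g : E →L[ℝ] ℝ) e => g e) Pi.topologicalSpace := by
  rw [induced_to_pi]; rfl

section WeakStar

variable {E : Type*} [NormedAddCommGroup E] [NormedSpace ℝ E]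

theorem wstarClosure_subset_closedBall {S : Set (E →L[ℝ] ℝ)} {g₀ : E →L[ℝ] ℝ} {r : ℝ}
    (hS : S ⊆ closedBall g₀ r) : closure[wstarTop E] S ⊆ closedBall g₀ r := by
  intro g hg
  rw [wstarTop_eq_induced, closure_induced] at hg
  exact ContinuousLinearMap.is_weak_closed_closedBall g₀ r (closure_mono (image_mono hS) hg)

theorem diam_wstarClosure_le {S : Set (E →L[ℝ] ℝ)} (hS : Bornology.IsBounded S) :
    diam (closure[wstarTop E] S) ≤ diam S := by
  have hclS_S : ∀ g ∈ closure[wstarTop E] S, ∀ h ∈ S, dist g h ≤ diam S := fun g hg h hh =>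
    wstarClosure_subset_closedBall (fun k hk => dist_le_diam_of_mem hS hk hh) hg
  refine diam_le_of_forall_dist_le diam_nonneg fun g hg h hh => ?_
  rw [dist_comm]
  exact wstarClosure_subset_closedBall (fun k hk => mem_closedBall'.2 (hclS_S g hg k hk)) hh

end WeakStar

section Goldstine

variable {X : Type*} [NormedAddCommGroup X] [NormedSpace ℝ X]

theorem helly_mem_closure {ι : Type*} [Fintype ι] (f : ι → X →L[ℝ] ℝ)
    {F : (X →L[ℝ] ℝ) →L[ℝ] ℝ} (hF : ‖F‖ ≤ 1) :
    (fun i => F (f i)) ∈ closure ((fun x i => f i x) '' closedBall (0 : X) 1) := by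
  classical
  set T := ContinuousLinearMap.pi f
  -- Otherwise separate the point from the closure of the convex set `T(B_X)` in `ℝ^ι` by `ℓ`;
  -- then `F (ℓ ∘ T) = ℓ (F (f i))ᵢ` exceeds `‖ℓ ∘ T‖`, contradicting `‖F‖ ≤ 1`.
  by_contra hnot
  obtain ⟨ℓ, u, hℓT, hℓF⟩ := geometric_hahn_banach_closed_point
    ((convex_closedBall (0 : X) 1).linear_image (T : X →ₗ[ℝ] ι → ℝ)).closure isClosed_closure hnot
  have hexpand : ∀ y, ℓ y = ∑ i, y i * ℓ (fun j => if i = j then 1 else 0) :=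
    (ℓ : (ι → ℝ) →ₗ[ℝ] ℝ).pi_apply_eq_sum_univ
  have hu : 0 < u := by simpa using hℓT 0 (subset_closure ⟨0, by simp, by simp⟩)
  have hℓT_lt : ∀ x ∈ closedBall (0 : X) 1, ℓ (T x) < u := fun x hx =>
    hℓT _ (subset_closure ⟨x, hx, rfl⟩)
  have hnorm : ‖ℓ.comp T‖ ≤ u := by
    refine ContinuousLinearMap.opNorm_le_of_unit_norm hu.le fun x hx => ?_
    have hpos := hℓT_lt x (mem_closedBall_zero_iff.2 hx.le)
    have hneg := hℓT_lt (-x) (mem_closedBall_zero_iff.2 (by rw [norm_neg, hx]))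
    rw [map_neg, map_neg] at hneg
    exact abs_le.2 ⟨neg_le.1 hneg.le, hpos.le⟩
  have hFcomp : F (ℓ.comp T) = ℓ (fun i => F (f i)) := by
    have : ℓ.comp T = ∑ i, ℓ (fun j => if i = j then 1 else 0) • f i := by
      ext x
      simp only [ContinuousLinearMap.comp_apply, sum_apply, smul_apply, smul_eq_mul]
      rw [hexpand]
      simp only [T, ContinuousLinearMap.pi_apply, mul_comm]
    rw [this, map_sum]
    conv_rhs => rw [hexpand]
    simp only [map_smul, smul_eq_mul, mul_comm]
  have := (F.le_of_opNorm_le hF (ℓ.comp T))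
  rw [Real.norm_eq_abs, hFcomp, one_mul] at this
  linarith [le_abs_self (ℓ fun i => F (f i))]

theorem mapsTo_inclusionInDoubleDualLi_closedBall (r : ℝ) :
    MapsTo (inclusionInDoubleDualLi ℝ (E := X)) (closedBall 0 r) (closedBall 0 r) := fun x hx =>
  (mem_closedBall_zero_iff (E := (X →L[ℝ] ℝ) →L[ℝ] ℝ)).2
    (((inclusionInDoubleDualLi ℝ).norm_map x).trans_le (mem_closedBall_zero_iff.1 hx))

theorem goldstine :
    closure[wstarTop (X →L[ℝ] ℝ)] (inclusionInDoubleDualLi ℝ (E := X) '' closedBall 0 1) =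
      closedBall 0 1 := by
  refine (wstarClosure_subset_closedBall ?_).antisymm fun F hF => ?_
  · exact (mapsTo_inclusionInDoubleDualLi_closedBall 1).image_subset
  rw [mem_closedBall_zero_iff] at hF
  rw [wstarTop_eq_induced, closure_induced, image_image, mem_closure_iff_nhds]
  intro U hU
  rw [nhds_pi, Filter.mem_pi] at hU
  obtain ⟨I, hI, t, ht, hIt⟩ := hU
  have := hI.fintype
  obtain ⟨_, hxt, x, hx, rfl⟩ := mem_closure_iff_nhds.1 (helly_mem_closure ((↑) : I → _) hF)
    (Set.pi univ fun i : I => t i) (set_pi_mem_nhds finite_univ fun i _ => ht i)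
  exact ⟨_, hIt fun f hf => hxt ⟨f, hf⟩ (mem_univ _), x, hx, rfl⟩

end Goldstine

section Correspondence

variable {X : Type*} [NormedAddCommGroup X] [NormedSpace ℝ X]

theorem isOpen_weakTop_iff_exists_preimage {V : Set X} :
    IsOpen[weakTop X] V ↔ ∃ W, IsOpen[wstarTop (X →L[ℝ] ℝ)] W ∧
      inclusionInDoubleDualLi ℝ (E := X) ⁻¹' W = V := by
  rw [weakTop_eq_induced, wstarTop_eq_induced]
  simp only [isOpen_induced_iff]
  constructor
  · rintro ⟨O, hO, rfl⟩
    exact ⟨_, ⟨O, hO, rfl⟩, rfl⟩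
  · rintro ⟨_, ⟨O, hO, rfl⟩, rfl⟩
    exact ⟨O, hO, rfl⟩

theorem image_preimage_inter_closedBall {W : Set ((X →L[ℝ] ℝ) →L[ℝ] ℝ)} :
    inclusionInDoubleDualLi ℝ (E := X) '' (inclusionInDoubleDualLi ℝ ⁻¹' W ∩ closedBall 0 1) =
      W ∩ inclusionInDoubleDualLi ℝ '' closedBall 0 1 := by
  rw [inter_comm, image_inter_preimage, inter_comm]

theorem image_preimage_inter_closedBall_subset (W : Set ((X →L[ℝ] ℝ) →L[ℝ] ℝ)) :
    inclusionInDoubleDualLi ℝ '' (inclusionInDoubleDualLi ℝ ⁻¹' W ∩ closedBall (0 : X) 1) ⊆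
      W ∩ closedBall 0 1 := by
  rw [image_preimage_inter_closedBall]
  exact inter_subset_inter_right W (mapsTo_inclusionInDoubleDualLi_closedBall 1).image_subset

theorem inter_closedBall_subset_wstarClosure {W : Set ((X →L[ℝ] ℝ) →L[ℝ] ℝ)}
    (hW : IsOpen[wstarTop (X →L[ℝ] ℝ)] W) :
    W ∩ closedBall 0 1 ⊆ closure[wstarTop (X →L[ℝ] ℝ)]
      (inclusionInDoubleDualLi ℝ '' (inclusionInDoubleDualLi ℝ ⁻¹' W ∩ closedBall 0 1)) := by
  rw [← goldstine, image_preimage_inter_closedBall]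
  exact @IsOpen.inter_closure _ (wstarTop _) _ _ hW

theorem nonempty_preimage_inter_closedBall_iff {W : Set ((X →L[ℝ] ℝ) →L[ℝ] ℝ)}
    (hW : IsOpen[wstarTop (X →L[ℝ] ℝ)] W) :
    (inclusionInDoubleDualLi ℝ ⁻¹' W ∩ closedBall (0 : X) 1).Nonempty ↔
      (W ∩ closedBall 0 1).Nonempty := by
  refine ⟨fun hV => (hV.image _).mono (image_preimage_inter_closedBall_subset W), fun hW' => ?_⟩
  have hcl := hW'.mono (inter_closedBall_subset_wstarClosure hW)
  rw [@closure_nonempty_iff _ (wstarTop _)] at hcl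
  exact hcl.of_image

theorem diam_preimage_inter_closedBall {W : Set ((X →L[ℝ] ℝ) →L[ℝ] ℝ)}
    (hW : IsOpen[wstarTop (X →L[ℝ] ℝ)] W) :
    diam (inclusionInDoubleDualLi ℝ ⁻¹' W ∩ closedBall (0 : X) 1) = diam (W ∩ closedBall 0 1) := by
  set J := inclusionInDoubleDualLi ℝ (E := X)
  have hJV : J '' (J ⁻¹' W ∩ closedBall 0 1) ⊆ closedBall 0 1 :=
    (image_preimage_inter_closedBall_subset W).trans inter_subset_right
  have hbdd : Bornology.IsBounded (J '' (J ⁻¹' W ∩ closedBall 0 1)) :=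
    isBounded_closedBall.subset hJV
  refine le_antisymm ?_ ?_
  · rw [← J.diam_image]
    exact diam_mono (image_preimage_inter_closedBall_subset W)
      (isBounded_closedBall.subset inter_subset_right)
  · calc diam (W ∩ closedBall 0 1)
        ≤ diam (closure[wstarTop (X →L[ℝ] ℝ)] (J '' (J ⁻¹' W ∩ closedBall 0 1))) :=
          diam_mono (inter_closedBall_subset_wstarClosure hW)
            (isBounded_closedBall.subset (wstarClosure_subset_closedBall hJV))
      _ ≤ diam (J '' (J ⁻¹' W ∩ closedBall 0 1)) := diam_wstarClosure_le hbdd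
      _ = diam (J ⁻¹' W ∩ closedBall 0 1) := J.diam_image _

end Correspondence

theorem statement1_general (X : Type*) [NormedAddCommGroup X] [NormedSpace ℝ X] :
    BHP X ↔ wstarBHP (X →L[ℝ] ℝ) := by
  refine forall₂_congr fun ε _ => ⟨?_, ?_⟩
  · rintro ⟨V, hV, hne, hdiam⟩
    obtain ⟨W, hW, rfl⟩ := isOpen_weakTop_iff_exists_preimage.1 hV
    exact ⟨W, hW, (nonempty_preimage_inter_closedBall_iff hW).1 hne,
      diam_preimage_inter_closedBall hW ▸ hdiam⟩
  · rintro ⟨W, hW, hne, hdiam⟩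
    exact ⟨_, isOpen_weakTop_iff_exists_preimage.2 ⟨W, hW, rfl⟩,
      (nonempty_preimage_inter_closedBall_iff hW).2 hne,
      (diam_preimage_inter_closedBall hW).symm ▸ hdiam⟩

/-- A Banach space `X` has `BHP` iff its bidual `X**` has `w*-BHP`. -/
theorem statement1 (X : Type*) [NormedAddCommGroup X] [NormedSpace ℝ X] [CompleteSpace X] :
    BHP X ↔ wstarBHP (X →L[ℝ] ℝ) :=
  statement1_general X
end
end

section
/- Let X be a real Banach space. Then X has the Ball Small Combination of Slices Property (BSCSP) if and only if the bidual X** has the w*-Ball Small Combination of Slices Property (w*-BSCSP), i.e. for every ε > 0 there is a finite convex combination of weak*-slices of the closed unit ball of X** (slices determined by norm-one elements of X*) whose diameter is less than ε. -/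
open Metric Topology Pointwise ENNReal

noncomputable section

/-!
The canonical embedding `X → X**` is an isometry carrying each slice `S(B_X, f, α)` into the
w*-slice `S(B_X**, f, α)`, hence a convex combination of slices into the corresponding
combination of w*-slices; so small combinations of w*-slices of `B_X**` give small combinations
of slices of `B_X`.

Conversely, let `C = ∑ λᵢ S(B_X, fᵢ, αᵢ)` and `C** = ∑ λᵢ S(B_X**, fᵢ, βᵢ)` with `βᵢ < αᵢ`. By
Goldstine's theorem, any `Φ ∈ S(B_X**, fᵢ, βᵢ)` can be approximated at a given `g ∈ B_X*` by
points of `B_X` that are also close to `Φ` at `fᵢ`, hence lie in `S(B_X, fᵢ, αᵢ)`. So for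
`Ψ, Θ ∈ C**`, `(Ψ - Θ) g` is, up to an arbitrary error, a value `g (x - y)` with `x, y ∈ C`,
and `diam C** ≤ diam C`.
-/

namespace Set

variable {ι R E : Type*} [Fintype ι] [AddCommMonoid E] [SMul R E]

theorem mem_sum_smul_iff {c : ι → R} {S : ι → Set E} {x : E} :
    x ∈ ∑ i, c i • S i ↔ ∃ y : ι → E, (∀ i, y i ∈ S i) ∧ ∑ i, c i • y i = x := by
  rw [mem_fintype_sum]
  constructor
  · rintro ⟨z, hz, rfl⟩
    choose y hy hyz using fun i => mem_smul_set.mp (hz i)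
    exact ⟨y, hy, by simp only [hyz]⟩
  · rintro ⟨y, hy, rfl⟩
    exact ⟨_, fun i => smul_mem_smul_set (hy i), rfl⟩

end Set

section Combinations

variable {ι 𝕜 E : Type*} [Fintype ι] [Field 𝕜] [LinearOrder 𝕜] [IsStrictOrderedRing 𝕜]
  [AddCommGroup E] [Module 𝕜 E] {c : ι → 𝕜} {S : ι → Set E}

theorem Convex.sum_smul_subset {K : Set E} (hK : Convex 𝕜 K) (hS : ∀ i, S i ⊆ K)
    (hc₀ : ∀ i, 0 ≤ c i) (hc₁ : ∑ i, c i = 1) : ∑ i, c i • S i ⊆ K := by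
  intro x hx
  obtain ⟨y, hy, rfl⟩ := Set.mem_sum_smul_iff.mp hx
  exact hK.sum_mem (fun i _ => hc₀ i) hc₁ fun i _ => hS i (hy i)

end Combinations

section Normed

variable {E : Type*} [NormedAddCommGroup E] [NormedSpace ℝ E]

theorem isBounded_sum_smul_of_subset_closedBall {ι : Type*} [Fintype ι] {c : ι → ℝ}
    {S : ι → Set E} (hS : ∀ i, S i ⊆ closedBall 0 1) (hc₀ : ∀ i, 0 ≤ c i)
    (hc₁ : ∑ i, c i = 1) : Bornology.IsBounded (∑ i, c i • S i) :=
  isBounded_closedBall.subset ((convex_closedBall 0 1).sum_smul_subset hS hc₀ hc₁)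

namespace ContinuousLinearMap

theorem norm_le_of_forall_apply_le (h : E →L[ℝ] ℝ) {C : ℝ}
    (hC : ∀ x, ‖x‖ ≤ 1 → h x ≤ C) : ‖h‖ ≤ C := by
  have hC₀ : 0 ≤ C := by simpa using hC 0 (by simp)
  refine h.opNorm_le_of_unit_norm hC₀ fun x hx => abs_le.mpr ⟨?_, hC x hx.le⟩
  exact neg_le.mp (by simpa using hC (-x) (by simp [hx]))

theorem apply_comp_pi {ι : Type*} [Fintype ι] [DecidableEq ι]
    (Φ : (E →L[ℝ] ℝ) →L[ℝ] ℝ) (f : (ι → ℝ) →L[ℝ] ℝ) (F : ι → E →L[ℝ] ℝ) :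
    Φ (f.comp (pi F)) = f fun j => Φ (F j) := by
  have hf : ∀ v, f v = ∑ j, v j * f (Pi.single j 1) := fun v => by
    conv_lhs => rw [← Finset.univ_sum_single v, map_sum]
    refine Finset.sum_congr rfl fun j _ => ?_
    rw [← smul_eq_mul, ← map_smul, ← Pi.single_smul', smul_eq_mul, mul_one]
  have hcomp : f.comp (pi F) = ∑ j, f (Pi.single j 1) • F j := by
    ext x
    rw [comp_apply, hf]
    simp [mul_comm]
  rw [hcomp, hf fun j => Φ (F j), map_sum]
  simp [mul_comm]

end ContinuousLinearMap

end Normed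

section Slices

variable {X : Type*} [NormedAddCommGroup X] [NormedSpace ℝ X]

/-- Goldstine's theorem, tested on finitely many functionals at a time. -/
theorem exists_mem_closedBall_forall_abs_sub_lt {ι : Type*} [Fintype ι]
    (F : ι → X →L[ℝ] ℝ) {Φ : (X →L[ℝ] ℝ) →L[ℝ] ℝ} (hΦ : ‖Φ‖ ≤ 1) {δ : ℝ} (hδ : 0 < δ) :
    ∃ x ∈ closedBall (0 : X) 1, ∀ j, |F j x - Φ (F j)| < δ := by
  classical
  set T := ContinuousLinearMap.pi F
  have hmem : (fun j => Φ (F j)) ∈ closure (T '' closedBall 0 1) := by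
    by_contra hc
    obtain ⟨f, u, hfu, hfc⟩ := geometric_hahn_banach_closed_point
      ((convex_closedBall (0 : X) 1).linear_image T.toLinearMap).closure isClosed_closure hc
    have hTu : ‖f.comp T‖ ≤ u := (f.comp T).norm_le_of_forall_apply_le fun x hx =>
      (hfu _ (subset_closure ⟨x, mem_closedBall_zero_iff.mpr hx, rfl⟩)).le
    have hΦu : Φ (f.comp T) ≤ u :=
      (le_abs_self _).trans ((Φ.le_of_opNorm_le hΦ _).trans (by simpa using hTu))
    rw [ContinuousLinearMap.apply_comp_pi] at hΦu
    exact hfc.not_ge hΦu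
  obtain ⟨_, ⟨x, hx, rfl⟩, hxδ⟩ := Metric.mem_closure_iff.mp hmem δ hδ
  refine ⟨x, hx, fun j => ?_⟩
  simpa [T, Real.dist_eq, abs_sub_comm] using (dist_le_pi_dist _ _ j).trans_lt hxδ

theorem inclusionInDoubleDualLi_mem_wstarSlice {f : X →L[ℝ] ℝ} {α : ℝ} {x : X}
    (hx : x ∈ ballSlice X f α) :
    NormedSpace.inclusionInDoubleDualLi ℝ x ∈ wstarSlice (X →L[ℝ] ℝ) f α :=
  ⟨by simpa [LinearIsometry.norm_map] using hx.1, hx.2⟩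

theorem exists_mem_ballSlice_abs_sub_lt {f : X →L[ℝ] ℝ} {α β : ℝ}
    {Φ : (X →L[ℝ] ℝ) →L[ℝ] ℝ} (hΦ : Φ ∈ wstarSlice (X →L[ℝ] ℝ) f β) (hβα : β < α)
    (g : X →L[ℝ] ℝ) {η : ℝ} (hη : 0 < η) : ∃ x ∈ ballSlice X f α, |g x - Φ g| < η := by
  obtain ⟨x, hx, hxΦ⟩ := exists_mem_closedBall_forall_abs_sub_lt ![f, g]
    (mem_closedBall_zero_iff.mp hΦ.1) (lt_min hη (sub_pos.mpr hβα))
  have hf := abs_lt.mp ((hxΦ 0).trans_le (min_le_right _ _))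
  have hg := (hxΦ 1).trans_le (min_le_left _ _)
  simp only [Matrix.cons_val_zero, Matrix.cons_val_one] at hf hg
  exact ⟨x, ⟨hx, by linarith [hΦ.2]⟩, hg⟩

variable {ι : Type*} [Fintype ι] {f : ι → X →L[ℝ] ℝ} {α β c : ι → ℝ}

theorem exists_mem_sum_smul_ballSlice_abs_sub_le {Ψ : (X →L[ℝ] ℝ) →L[ℝ] ℝ}
    (hΨ : Ψ ∈ ∑ i, c i • wstarSlice (X →L[ℝ] ℝ) (f i) (β i)) (hβα : ∀ i, β i < α i)
    (hc₀ : ∀ i, 0 ≤ c i) (hc₁ : ∑ i, c i = 1) (g : X →L[ℝ] ℝ) {η : ℝ} (hη : 0 < η) :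
    ∃ x ∈ ∑ i, c i • ballSlice X (f i) (α i), |g x - Ψ g| ≤ η := by
  obtain ⟨P, hP, rfl⟩ := Set.mem_sum_smul_iff.mp hΨ
  choose x hx hxP using fun i => exists_mem_ballSlice_abs_sub_lt (hP i) (hβα i) g hη
  refine ⟨∑ i, c i • x i, Set.mem_sum_smul_iff.mpr ⟨x, hx, rfl⟩, ?_⟩
  calc |g (∑ i, c i • x i) - (∑ i, c i • P i) g| = |∑ i, c i * (g (x i) - P i g)| := by
        simp [map_sum, mul_sub]
    _ ≤ ∑ i, c i * |g (x i) - P i g| := by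
        refine (Finset.abs_sum_le_sum_abs _ _).trans_eq (Finset.sum_congr rfl fun i _ => ?_)
        rw [abs_mul, abs_of_nonneg (hc₀ i)]
    _ ≤ ∑ i, c i * η := Finset.sum_le_sum fun i _ => mul_le_mul_of_nonneg_left (hxP i).le (hc₀ i)
    _ = η := by rw [← Finset.sum_mul, hc₁, one_mul]

theorem diam_sum_smul_wstarSlice_le (hβα : ∀ i, β i < α i) (hc₀ : ∀ i, 0 ≤ c i)
    (hc₁ : ∑ i, c i = 1) :
    diam (∑ i, c i • wstarSlice (X →L[ℝ] ℝ) (f i) (β i)) ≤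
      diam (∑ i, c i • ballSlice X (f i) (α i)) := by
  have hC := isBounded_sum_smul_of_subset_closedBall
    (S := fun i => ballSlice X (f i) (α i)) (fun _ _ hx => hx.1) hc₀ hc₁
  refine diam_le_of_forall_dist_le diam_nonneg fun Ψ hΨ Θ hΘ => ?_
  rw [dist_eq_norm]
  refine ContinuousLinearMap.norm_le_of_forall_apply_le _ fun g hg => ?_
  refine le_of_forall_pos_le_add fun η hη => ?_
  obtain ⟨x, hx, hxΨ⟩ := exists_mem_sum_smul_ballSlice_abs_sub_le hΨ hβα hc₀ hc₁ g (half_pos hη)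
  obtain ⟨y, hy, hyΘ⟩ := exists_mem_sum_smul_ballSlice_abs_sub_le hΘ hβα hc₀ hc₁ g (half_pos hη)
  have hxy : g x - g y ≤ diam (∑ i, c i • ballSlice X (f i) (α i)) :=
    calc g x - g y ≤ ‖g (x - y)‖ := by rw [map_sub]; exact le_abs_self _
      _ ≤ ‖x - y‖ := by simpa using g.le_of_opNorm_le hg (x - y)
      _ ≤ _ := by rw [← dist_eq_norm]; exact dist_le_diam_of_mem hC hx hy
  rw [sub_apply]
  linarith [abs_le.mp hxΨ, abs_le.mp hyΘ]

theorem diam_sum_smul_ballSlice_le (hc₀ : ∀ i, 0 ≤ c i) (hc₁ : ∑ i, c i = 1) :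
    diam (∑ i, c i • ballSlice X (f i) (α i)) ≤
      diam (∑ i, c i • wstarSlice (X →L[ℝ] ℝ) (f i) (α i)) := by
  set J := NormedSpace.inclusionInDoubleDualLi ℝ (E := X)
  have hJ : (J : X → (X →L[ℝ] ℝ) →L[ℝ] ℝ) '' (∑ i, c i • ballSlice X (f i) (α i)) ⊆
      ∑ i, c i • wstarSlice (X →L[ℝ] ℝ) (f i) (α i) := by
    rintro _ ⟨_, hx, rfl⟩
    obtain ⟨y, hy, rfl⟩ := Set.mem_sum_smul_iff.mp hx
    refine Set.mem_sum_smul_iff.mpr ⟨fun i => J (y i),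
      fun i => inclusionInDoubleDualLi_mem_wstarSlice (hy i), ?_⟩
    calc ∑ i, c i • J (y i) = ∑ i, J (c i • y i) := by simp only [LinearIsometry.map_smul]
      _ = J (∑ i, c i • y i) := (map_sum J.toLinearMap _ _).symm
  have hbdd : Bornology.IsBounded (∑ i, c i • wstarSlice (X →L[ℝ] ℝ) (f i) (α i)) :=
    isBounded_sum_smul_of_subset_closedBall (S := fun i => wstarSlice (X →L[ℝ] ℝ) (f i) (α i))
      (fun _ _ hx => hx.1) hc₀ hc₁
  exact (J.isometry.diam_image _).symm.trans_le (diam_mono hJ hbdd)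

end Slices

theorem statement2_general (X : Type*) [NormedAddCommGroup X] [NormedSpace ℝ X] :
    BSCSP X ↔ wstarBSCSP (X →L[ℝ] ℝ) := by
  constructor
  · intro h ε hε
    obtain ⟨n, f, α, c, hf, hα, hc₀, hc₁, hdiam⟩ := h ε hε
    exact ⟨n, f, fun i => α i / 2, c, hf, fun i => half_pos (hα i), hc₀, hc₁,
      (diam_sum_smul_wstarSlice_le (fun i => half_lt_self (hα i)) hc₀ hc₁).trans_lt hdiam⟩
  · intro h ε hε
    obtain ⟨n, f, α, c, hf, hα, hc₀, hc₁, hdiam⟩ := h ε hε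
    exact ⟨n, f, α, c, hf, hα, hc₀, hc₁, (diam_sum_smul_ballSlice_le hc₀ hc₁).trans_lt hdiam⟩

/-- A Banach space `X` has `BSCSP` iff its bidual `X**` has `w*-BSCSP`. -/
theorem statement2 (X : Type*) [NormedAddCommGroup X] [NormedSpace ℝ X] [CompleteSpace X] :
    BSCSP X ↔ wstarBSCSP (X →L[ℝ] ℝ) :=
  statement2_general X
end
end

section
/- Let X and Y be real Banach spaces, 1 ≤ p < ∞, and Z = X ⊕_p Y (the product X × Y with norm ‖(x,y)‖ = (‖x‖^p + ‖y‖^p)^{1/p}). For every slice S(B_X, x*, α) of B_X (where x* in X* has norm one and α > 0) and every ε > 0, there exist a norm-one functional z* in Z* and μ > 0 such that the slice S(B_Z, z*, μ) of B_Z is contained in the set S(B_X, x*, α) × εB_Y, i.e. every (x,y) in S(B_Z, z*, μ) satisfies x ∈ S(B_X, x*, α) and ‖y‖ ≤ ε. -/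
open Metric Topology Pointwise ENNReal

noncomputable section

/-!
Take `z* = x* ∘ π_X`. On a slice `S(B_Z, z*, μ)` the first coordinate satisfies
`‖x‖ ≥ x*(x) > 1 - μ`, so `‖y‖^p = ‖z‖^p - ‖x‖^p ≤ 1 - (1 - μ)^p ≤ p μ` by Bernoulli's
inequality, so `μ = min(α, 1, ε^p / p)` works.
-/

theorem WithLp.prod_norm_rpow_eq_add {p : ℝ≥0∞} {α β : Type*} [SeminormedAddCommGroup α]
    [SeminormedAddCommGroup β] (hp : 0 < p.toReal) (z : WithLp p (α × β)) :
    ‖z‖ ^ p.toReal = ‖z.fst‖ ^ p.toReal + ‖z.snd‖ ^ p.toReal := by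
  rw [WithLp.prod_norm_eq_add hp, ← Real.rpow_mul (by positivity), one_div,
    inv_mul_cancel₀ hp.ne', Real.rpow_one]

theorem WithLp.prod_norm_snd_rpow_le {p : ℝ≥0∞} [Fact (1 ≤ p)] (hp : p ≠ ∞) {α β : Type*}
    [SeminormedAddCommGroup α] [SeminormedAddCommGroup β] {z : WithLp p (α × β)}
    (hz : ‖z‖ ≤ 1) {μ : ℝ} (hμ : μ ≤ 1) (hfst : 1 - μ ≤ ‖z.fst‖) :
    ‖z.snd‖ ^ p.toReal ≤ p.toReal * μ := by
  have hq : 1 ≤ p.toReal := by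
    simpa using ENNReal.toReal_mono hp (Fact.out : 1 ≤ p)
  have bernoulli := one_add_mul_self_le_rpow_one_add (s := -μ) (by linarith) hq
  calc ‖z.snd‖ ^ p.toReal = ‖z‖ ^ p.toReal - ‖z.fst‖ ^ p.toReal := by
        rw [WithLp.prod_norm_rpow_eq_add (by linarith)]; ring
    _ ≤ 1 - (1 - μ) ^ p.toReal := by
        gcongr
        exact Real.rpow_le_one (norm_nonneg _) hz (by linarith)
    _ ≤ p.toReal * μ := by
        rw [← sub_eq_add_neg] at bernoulli
        linarith

theorem ContinuousLinearMap.norm_comp_fstL {𝕜 E F G : Type*} [NontriviallyNormedField 𝕜]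
    [NormedAddCommGroup E] [NormedSpace 𝕜 E] [NormedAddCommGroup F] [NormedSpace 𝕜 F]
    [NormedAddCommGroup G] [NormedSpace 𝕜 G] (p : ℝ≥0∞) [Fact (1 ≤ p)] (f : E →L[𝕜] G) :
    ‖f.comp (WithLp.fstL p 𝕜 E F)‖ = ‖f‖ := by
  refine le_antisymm
    ((f.comp _).opNorm_le_bound (norm_nonneg _) fun z ↦
      (f.le_opNorm z.fst).trans (by gcongr; exact WithLp.norm_fst_le _ z))
    (f.opNorm_le_bound (norm_nonneg _) fun x ↦ ?_)
  simpa using (f.comp (WithLp.fstL p 𝕜 E F)).le_opNorm (WithLp.toLp p (x, (0 : F)))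

theorem one_sub_lt_norm_of_mem_ballSlice {X : Type*} [NormedAddCommGroup X] [NormedSpace ℝ X]
    {f : X →L[ℝ] ℝ} (hf : ‖f‖ ≤ 1) {μ : ℝ} {x : X} (hx : x ∈ ballSlice X f μ) :
    1 - μ < ‖x‖ :=
  hx.2.trans_le ((le_abs_self _).trans (by simpa using f.le_of_opNorm_le hf x))

theorem ballSlice_mono {X : Type*} [NormedAddCommGroup X] [NormedSpace ℝ X]
    (f : X →L[ℝ] ℝ) {μ α : ℝ} (h : μ ≤ α) : ballSlice X f μ ⊆ ballSlice X f α :=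
  fun _ hx ↦ ⟨hx.1, by linarith [hx.2]⟩

theorem statement3_general (X Y : Type*) [NormedAddCommGroup X] [NormedSpace ℝ X]
    [NormedAddCommGroup Y] [NormedSpace ℝ Y]
    (p : ℝ≥0∞) [Fact (1 ≤ p)] (hp : p ≠ ∞)
    (f : X →L[ℝ] ℝ) (hf : ‖f‖ = 1) (α : ℝ) (hα : 0 < α) (ε : ℝ) (hε : 0 < ε) :
    ∃ g : WithLp p (X × Y) →L[ℝ] ℝ, ‖g‖ = 1 ∧ ∃ μ > (0 : ℝ),
      ballSlice (WithLp p (X × Y)) g μ ⊆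
        {z : WithLp p (X × Y) | (WithLp.equiv p (X × Y) z).1 ∈ ballSlice X f α ∧
          ‖(WithLp.equiv p (X × Y) z).2‖ ≤ ε} := by
  set q := p.toReal
  have hq : 0 < q := ENNReal.toReal_pos (one_pos.trans_le Fact.out).ne' hp
  set μ := min (min α 1) (ε ^ q / q)
  have hμα : μ ≤ α := (min_le_left _ _).trans (min_le_left _ _)
  have hμ1 : μ ≤ 1 := (min_le_left _ _).trans (min_le_right _ _)
  refine ⟨f.comp (WithLp.fstL p ℝ X Y), (f.norm_comp_fstL p).trans hf, μ, by positivity, ?_⟩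
  rintro z ⟨hz, hgz⟩
  rw [mem_closedBall_zero_iff] at hz
  have hfst : z.fst ∈ ballSlice X f μ :=
    ⟨mem_closedBall_zero_iff.2 ((WithLp.norm_fst_le _ z).trans hz), hgz⟩
  refine ⟨ballSlice_mono f hμα hfst, ?_⟩
  have hsnd : ‖z.snd‖ ^ q ≤ ε ^ q :=
    calc ‖z.snd‖ ^ q ≤ q * μ := WithLp.prod_norm_snd_rpow_le hp hz hμ1
          (one_sub_lt_norm_of_mem_ballSlice hf.le hfst).le
      _ ≤ q * (ε ^ q / q) := by gcongr; exact min_le_right _ _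
      _ = ε ^ q := by field_simp
  exact (Real.rpow_le_rpow_iff (norm_nonneg _) hε.le hq).1 hsnd

/-- For `Z = X ⊕_p Y` (`1 ≤ p < ∞`), any slice of `B_X` and any `ε > 0`, there is a slice
of `B_Z` contained in `S(B_X, x*, α) × ε B_Y`. -/
theorem statement3 (X Y : Type*) [NormedAddCommGroup X] [NormedSpace ℝ X] [CompleteSpace X]
    [NormedAddCommGroup Y] [NormedSpace ℝ Y] [CompleteSpace Y]
    (p : ℝ≥0∞) [Fact (1 ≤ p)] (hp : p ≠ ∞)
    (f : X →L[ℝ] ℝ) (hf : ‖f‖ = 1) (α : ℝ) (hα : 0 < α) (ε : ℝ) (hε : 0 < ε) :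
    ∃ g : WithLp p (X × Y) →L[ℝ] ℝ, ‖g‖ = 1 ∧ ∃ μ > (0 : ℝ),
      ballSlice (WithLp p (X × Y)) g μ ⊆
        {z : WithLp p (X × Y) | (WithLp.equiv p (X × Y) z).1 ∈ ballSlice X f α ∧
          ‖(WithLp.equiv p (X × Y) z).2‖ ≤ ε} :=
  statement3_general X Y p hp f hf α hα ε hε
end
end

section
/- Let X and Y be real Banach spaces and Z = X ⊕_∞ Y (the product X × Y with norm ‖(x,y)‖ = max(‖x‖, ‖y‖)). Then Z has the Ball Huskable Property (BHP) if and only if both X and Y have BHP. -/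
open Metric Topology Pointwise ENNReal

noncomputable section

/-! Continuous linear maps are weak-to-weak continuous. So a relatively weakly open piece of the
unit ball of `X ⊕_∞ Y` through `(x₀, y₀)` pulls back, along the weakly continuous isometry
`x ↦ (x, y₀)` of `B_X` into the ball, to a relatively weakly open piece of `B_X` through `x₀`
of no larger diameter; the factor `Y` follows through the swap `X ⊕_∞ Y ≃ Y ⊕_∞ X`.
Conversely, for weakly open `U ⊆ X` and `V ⊆ Y` the set `U × V` is weakly open, and as the
unit ball of the sup-norm is `B_X × B_Y`, its part in the ball has diameter at most the larger
of the diameters of `U ∩ B_X` and `V ∩ B_Y`. -/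

open Set

section WeakTop

variable {X E : Type*} [NormedAddCommGroup X] [NormedSpace ℝ X]
  [NormedAddCommGroup E] [NormedSpace ℝ E]

lemma continuous_weakTop_dual (f : X →L[ℝ] ℝ) : Continuous[weakTop X, inferInstance] f :=
  continuous_iff_le_induced.2 (iInf_le _ f)

lemma ContinuousLinearMap.continuous_weakTop_add_const (T : X →L[ℝ] E) (c : E) :
    Continuous[weakTop X, weakTop E] fun x => T x + c :=
  continuous_iInf_rng.2 fun f => continuous_induced_rng.2 <|
    show Continuous[weakTop X, _] fun x => f (T x + c) by
    simp only [map_add]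
    exact @Continuous.add _ _ _ _ _ (weakTop X) _ _ (continuous_weakTop_dual (f.comp T))
      (@continuous_const _ _ (weakTop X) _ _)

lemma ContinuousLinearMap.continuous_weakTop (T : X →L[ℝ] E) :
    Continuous[weakTop X, weakTop E] T := by
  simpa only [add_zero] using T.continuous_weakTop_add_const 0

theorem BHP.of_forall_isometry_through {Z : Type*} [NormedAddCommGroup Z] [NormedSpace ℝ Z]
    (hZ : BHP Z)
    (h : ∀ z ∈ closedBall (0 : Z) 1, ∃ ι : X → Z, Continuous[weakTop X, weakTop Z] ι ∧
      Isometry ι ∧ MapsTo ι (closedBall 0 1) (closedBall 0 1) ∧ z ∈ ι '' closedBall 0 1) :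
    BHP X := by
  intro ε hε
  obtain ⟨V, hV, ⟨z, hzV, hzB⟩, hdiam⟩ := hZ ε hε
  obtain ⟨ι, hcont, hisom, hmaps, x, hxB, rfl⟩ := h z hzB
  refine ⟨ι ⁻¹' V, continuous_def.1 hcont V hV, ⟨x, hzV, hxB⟩, ?_⟩
  calc diam (ι ⁻¹' V ∩ closedBall 0 1) = diam (ι '' (ι ⁻¹' V ∩ closedBall 0 1)) :=
        (hisom.diam_image _).symm
    _ ≤ diam (V ∩ closedBall 0 1) :=
        diam_mono (image_subset_iff.2 fun x hx => ⟨hx.1, hmaps hx.2⟩)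
          (isBounded_closedBall.subset inter_subset_right)
    _ < ε := hdiam

theorem BHP.of_linearIsometryEquiv (e : X ≃ₗᵢ[ℝ] E) (h : BHP X) : BHP E :=
  h.of_forall_isometry_through fun z hz =>
    ⟨e.symm, e.symm.toContinuousLinearEquiv.toContinuousLinearMap.continuous_weakTop,
      e.symm.isometry, fun y hy => by simpa using hy, e z, by simpa using hz, by simp⟩

end WeakTop

section Prod

variable {X Y : Type*} [NormedAddCommGroup X] [NormedAddCommGroup Y]

lemma WithLp.mem_closedBall_zero_prod_infty (z : WithLp ∞ (X × Y)) (r : ℝ) :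
    z ∈ closedBall 0 r ↔ z.fst ∈ closedBall 0 r ∧ z.snd ∈ closedBall 0 r := by
  simp only [mem_closedBall_zero_iff, WithLp.prod_norm_eq_sup, sup_le_iff]

lemma WithLp.isometry_toLp_prod_infty_left (y : Y) :
    Isometry fun x : X => WithLp.toLp ∞ (x, y) :=
  Isometry.of_dist_eq fun x x' => by simp [WithLp.prod_dist_eq_sup]

lemma WithLp.diam_prod_infty_le {s : Set (WithLp ∞ (X × Y))} {A : Set X} {B : Set Y}
    (hA : Bornology.IsBounded A) (hB : Bornology.IsBounded B)
    (hs : ∀ z ∈ s, z.fst ∈ A ∧ z.snd ∈ B) : diam s ≤ max (diam A) (diam B) :=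
  diam_le_of_forall_dist_le (le_max_of_le_left diam_nonneg) fun z hz z' hz' => by
    rw [WithLp.prod_dist_eq_sup]
    exact max_le_max (dist_le_diam_of_mem hA (hs z hz).1 (hs z' hz').1)
      (dist_le_diam_of_mem hB (hs z hz).2 (hs z' hz').2)

variable [NormedSpace ℝ X] [NormedSpace ℝ Y]

lemma WithLp.continuous_weakTop_toLp_prod_infty_left (y : Y) :
    Continuous[weakTop X, weakTop (WithLp ∞ (X × Y))] fun x : X => WithLp.toLp ∞ (x, y) := by
  convert ((WithLp.prodContinuousLinearEquiv ∞ ℝ X Y).symm.toContinuousLinearMap.comp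
    (ContinuousLinearMap.inl ℝ X Y)).continuous_weakTop_add_const (WithLp.toLp ∞ (0, y)) using 2
  simp [← WithLp.toLp_add]

theorem BHP.of_prod_infty_left (h : BHP (WithLp ∞ (X × Y))) : BHP X :=
  h.of_forall_isometry_through fun z hz => by
    rw [WithLp.mem_closedBall_zero_prod_infty] at hz
    refine ⟨fun x => WithLp.toLp ∞ (x, z.snd), WithLp.continuous_weakTop_toLp_prod_infty_left _,
      WithLp.isometry_toLp_prod_infty_left _,
      fun x hx => (WithLp.mem_closedBall_zero_prod_infty _ _).2 ⟨hx, hz.2⟩, z.fst, hz.1, rfl⟩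

theorem BHP.of_prod_infty_right (h : BHP (WithLp ∞ (X × Y))) : BHP Y :=
  (h.of_linearIsometryEquiv (LinearIsometryEquiv.withLpProdComm ∞ ℝ X Y)).of_prod_infty_left

theorem BHP.prod_infty (hX : BHP X) (hY : BHP Y) : BHP (WithLp ∞ (X × Y)) := by
  intro ε hε
  obtain ⟨U, hU, ⟨x, hxU, hxB⟩, hdiamU⟩ := hX ε hε
  obtain ⟨V, hV, ⟨y, hyV, hyB⟩, hdiamV⟩ := hY ε hε
  refine ⟨WithLp.fst ⁻¹' U ∩ WithLp.snd ⁻¹' V,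
    (weakTop _).isOpen_inter _ _
      (continuous_def.1 (WithLp.fstL ∞ ℝ X Y).continuous_weakTop U hU)
      (continuous_def.1 (WithLp.sndL ∞ ℝ X Y).continuous_weakTop V hV),
    ⟨WithLp.toLp ∞ (x, y), ⟨hxU, hyV⟩,
      (WithLp.mem_closedBall_zero_prod_infty _ _).2 ⟨hxB, hyB⟩⟩, ?_⟩
  refine (WithLp.diam_prod_infty_le (isBounded_closedBall.subset inter_subset_right)
    (isBounded_closedBall.subset inter_subset_right) fun z hz => ?_).trans_lt
    (max_lt hdiamU hdiamV)
  obtain ⟨⟨hzU, hzV⟩, hzB⟩ := hz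
  rw [WithLp.mem_closedBall_zero_prod_infty] at hzB
  exact ⟨⟨hzU, hzB.1⟩, ⟨hzV, hzB.2⟩⟩

end Prod

theorem statement8_general (X Y : Type*) [NormedAddCommGroup X] [NormedSpace ℝ X]
    [NormedAddCommGroup Y] [NormedSpace ℝ Y] :
    BHP (WithLp ∞ (X × Y)) ↔ BHP X ∧ BHP Y :=
  ⟨fun h => ⟨h.of_prod_infty_left, h.of_prod_infty_right⟩,
    fun ⟨hX, hY⟩ => hX.prod_infty hY⟩

/-- `Z = X ⊕_∞ Y` has `BHP` iff both `X` and `Y` have `BHP`. -/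
theorem statement8 (X Y : Type*) [NormedAddCommGroup X] [NormedSpace ℝ X] [CompleteSpace X]
    [NormedAddCommGroup Y] [NormedSpace ℝ Y] [CompleteSpace Y] :
    BHP (WithLp ∞ (X × Y)) ↔ BHP X ∧ BHP Y :=
  statement8_general X Y
end
end

section
/- Let X and Y be real Banach spaces, 1 < p ≤ ∞, and Z = X ⊕_p Y (with norm ‖(x,y)‖ = (‖x‖^p + ‖y‖^p)^{1/p} for p < ∞ and max(‖x‖,‖y‖) for p = ∞). If X* has the w*-Ball Small Combination of Slices Property (w*-BSCSP) or Y* has w*-BSCSP, then Z* has w*-BSCSP. -/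
open Metric Topology Pointwise ENNReal

noncomputable section

/-!
Let `∑ λᵢ • S(eᵢ, αᵢ)` be a convex combination of weak* slices of `B_{X*}` of small diameter.
For `p > 1` the norm of `X ⊕_p Y` is flat at `(e, 0)` in the directions of `Y`:
`‖(e, y)‖ ≤ 1 + o(‖y‖)`. Hence a functional `G ∈ B_{Z*}` with `G (e, 0)` close to `1` nearly
vanishes on `Y`, i.e. it is close to `(G ∘ inl) ∘ fst`. For the slices of `B_{Z*}` at the points
`(eᵢ, 0)` (with smaller `αᵢ`), restriction `G ↦ G ∘ inl` maps their combination into the given one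
and extension `g ↦ g ∘ fst` does not increase distances, so the new combination is small as well.
-/

section MinkowskiCombination

variable {ι R V W : Type*} [Fintype ι] [AddCommMonoid V] [AddCommMonoid W]

theorem Set.mem_sum_smul_iff_s14 [SMul R V] (c : ι → R) (S : ι → Set V) (a : V) :
    a ∈ ∑ i, c i • S i ↔ ∃ g : ι → V, (∀ i, g i ∈ S i) ∧ ∑ i, c i • g i = a := by
  simp only [Set.mem_fintype_sum, Set.mem_smul_set]
  constructor
  · rintro ⟨g, hg, rfl⟩
    choose h hS hh using hg
    exact ⟨h, hS, by simp only [hh]⟩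
  · rintro ⟨g, hg, rfl⟩
    exact ⟨fun i => c i • g i, fun i => ⟨g i, hg i, rfl⟩, rfl⟩

theorem Set.mapsTo_sum_smul [Semiring R] [Module R V] [Module R W] {f : V → W}
    (hf : IsLinearMap R f) (c : ι → R) {S : ι → Set V} {S' : ι → Set W}
    (h : ∀ i, MapsTo f (S i) (S' i)) : MapsTo f (∑ i, c i • S i) (∑ i, c i • S' i) := by
  intro a ha
  obtain ⟨g, hg, rfl⟩ := (Set.mem_sum_smul_iff_s14 c S a).1 ha
  refine (Set.mem_sum_smul_iff_s14 c S' _).2 ⟨fun i => f (g i), fun i => h i (hg i), ?_⟩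
  let L := IsLinearMap.mk' f hf
  change ∑ i, c i • L (g i) = L (∑ i, c i • g i)
  simp only [map_sum, map_smul]

theorem Convex.sum_smul_subset_s14 {V : Type*} [AddCommGroup V] [Module ℝ V] {C : Set V}
    (hC : Convex ℝ C) {c : ι → ℝ} (h₀ : ∀ i, 0 ≤ c i) (h₁ : ∑ i, c i = 1) {S : ι → Set V}
    (hS : ∀ i, S i ⊆ C) : ∑ i, c i • S i ⊆ C := by
  intro a ha
  obtain ⟨g, hg, rfl⟩ := (Set.mem_sum_smul_iff_s14 c S a).1 ha
  exact hC.sum_mem (fun i _ => h₀ i) h₁ fun i _ => hS i (hg i)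

end MinkowskiCombination

section WstarSlices

variable {E Z W : Type*} [NormedAddCommGroup E] [NormedSpace ℝ E]
  [NormedAddCommGroup Z] [NormedSpace ℝ Z] [NormedAddCommGroup W] [NormedSpace ℝ W]

theorem wstarSlice_subset_closedBall (e : E) (α : ℝ) :
    wstarSlice E e α ⊆ closedBall 0 1 := fun _ hg => hg.1

theorem wstarSlice_mono (e : E) {α β : ℝ} (hβα : β ≤ α) : wstarSlice E e β ⊆ wstarSlice E e α :=
  fun _ hg => ⟨hg.1, hg.2.trans_le' (by linarith)⟩

theorem mapsTo_comp_wstarSlice (T : E →ₗᵢ[ℝ] Z) (e : E) (α : ℝ) :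
    Set.MapsTo (fun G : Z →L[ℝ] ℝ => G.comp T.toContinuousLinearMap)
      (wstarSlice Z (T e) α) (wstarSlice E e α) := by
  rintro G ⟨hG, hGe⟩
  refine ⟨?_, hGe⟩
  rw [mem_closedBall_zero_iff] at hG ⊢
  calc ‖G.comp T.toContinuousLinearMap‖ ≤ ‖G‖ * ‖T.toContinuousLinearMap‖ := G.opNorm_comp_le _
    _ ≤ 1 * 1 := by gcongr; exact T.norm_toContinuousLinearMap_le
    _ = 1 := one_mul 1

theorem isLinearMap_comp (T : E →L[ℝ] Z) : IsLinearMap ℝ fun G : Z →L[ℝ] ℝ => G.comp T :=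
  ⟨fun _ _ => ContinuousLinearMap.add_comp _ _ _, fun _ _ => ContinuousLinearMap.smul_comp _ _ _⟩

theorem isLinearMap_sub_comp_comp (T : E →L[ℝ] Z) (Q : Z →L[ℝ] E) :
    IsLinearMap ℝ fun G : Z →L[ℝ] ℝ => G - (G.comp T).comp Q :=
  ⟨fun _ _ => by simp only [ContinuousLinearMap.add_comp]; abel,
    fun _ _ => by simp only [ContinuousLinearMap.smul_comp, smul_sub]⟩

theorem norm_sub_le_norm_sub_comp_comp_add (A B : Z →L[ℝ] ℝ) (T : E →L[ℝ] Z) {Q : Z →L[ℝ] E}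
    (hQ : ‖Q‖ ≤ 1) :
    ‖A - B‖ ≤ ‖A - (A.comp T).comp Q‖ + ‖A.comp T - B.comp T‖ + ‖B - (B.comp T).comp Q‖ := by
  have hmid : ‖(A.comp T).comp Q - (B.comp T).comp Q‖ ≤ ‖A.comp T - B.comp T‖ := calc
    _ = ‖(A.comp T - B.comp T).comp Q‖ := by rw [ContinuousLinearMap.sub_comp]
    _ ≤ ‖A.comp T - B.comp T‖ * ‖Q‖ := ContinuousLinearMap.opNorm_comp_le _ _
    _ ≤ ‖A.comp T - B.comp T‖ * 1 := by gcongr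
    _ = ‖A.comp T - B.comp T‖ := mul_one _
  calc ‖A - B‖ = ‖(A - (A.comp T).comp Q) + ((A.comp T).comp Q - (B.comp T).comp Q)
        - (B - (B.comp T).comp Q)‖ := by abel_nf
    _ ≤ _ := norm_sub_le_of_le (norm_add_le_of_le le_rfl hmid) le_rfl

theorem diam_sum_smul_wstarSlice_le_s14 (T : E →ₗᵢ[ℝ] Z) {Q : Z →L[ℝ] E} (hQ : ‖Q‖ ≤ 1)
    {ι : Type*} [Fintype ι] (e : ι → E) (α α' lam : ι → ℝ) (hlam₀ : ∀ i, 0 ≤ lam i)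
    (hlam₁ : ∑ i, lam i = 1) {δ : ℝ} (hδ : 0 ≤ δ)
    (hclose : ∀ i, ∀ G ∈ wstarSlice Z (T (e i)) (α' i),
      ‖G - (G.comp T.toContinuousLinearMap).comp Q‖ ≤ δ) :
    diam (∑ i, lam i • wstarSlice Z (T (e i)) (min (α i) (α' i))) ≤
      δ + diam (∑ i, lam i • wstarSlice E (e i) (α i)) + δ := by
  have hball : ∑ i, lam i • closedBall (0 : Z →L[ℝ] ℝ) δ ⊆ closedBall 0 δ :=
    Convex.sum_smul_subset_s14 (S := fun _ => closedBall (0 : Z →L[ℝ] ℝ) δ) (convex_closedBall 0 δ)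
      hlam₀ hlam₁ fun _ => subset_rfl
  have hbdd : Bornology.IsBounded (∑ i, lam i • wstarSlice E (e i) (α i)) :=
    isBounded_closedBall.subset <| (convex_closedBall 0 1).sum_smul_subset_s14 hlam₀ hlam₁
      fun i => wstarSlice_subset_closedBall _ _
  have hrestrict : Set.MapsTo (fun G : Z →L[ℝ] ℝ => G.comp T.toContinuousLinearMap)
      (∑ i, lam i • wstarSlice Z (T (e i)) (min (α i) (α' i)))
      (∑ i, lam i • wstarSlice E (e i) (α i)) :=
    Set.mapsTo_sum_smul (isLinearMap_comp T.toContinuousLinearMap) lam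
      fun i => (mapsTo_comp_wstarSlice T (e i) _).mono_left (wstarSlice_mono _ (min_le_left _ _))
  have hdefect : Set.MapsTo (fun G : Z →L[ℝ] ℝ => G - (G.comp T.toContinuousLinearMap).comp Q)
      (∑ i, lam i • wstarSlice Z (T (e i)) (min (α i) (α' i))) (closedBall 0 δ) := by
    refine (Set.mapsTo_sum_smul (isLinearMap_sub_comp_comp T.toContinuousLinearMap Q) lam
      fun i G hG => ?_).mono_right hball
    exact mem_closedBall_zero_iff.2 (hclose i G (wstarSlice_mono _ (min_le_right _ _) hG))
  refine diam_le_of_forall_dist_le (by positivity) fun A hA B hB => ?_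
  rw [dist_eq_norm]
  refine (norm_sub_le_norm_sub_comp_comp_add A B T.toContinuousLinearMap hQ).trans ?_
  gcongr
  · exact mem_closedBall_zero_iff.1 (hdefect hA)
  · rw [← dist_eq_norm]
    exact dist_le_diam_of_mem hbdd (hrestrict hA) (hrestrict hB)
  · exact mem_closedBall_zero_iff.1 (hdefect hB)

theorem wstarBSCSP_of_forall_wstarSlice_norm_sub_comp_le (T : E →ₗᵢ[ℝ] Z) (Q : Z →L[ℝ] E)
    (hQ : ‖Q‖ ≤ 1)
    (hclose : ∀ e : E, ‖e‖ = 1 → ∀ δ > 0, ∃ α > 0, ∀ G ∈ wstarSlice Z (T e) α,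
      ‖G - (G.comp T.toContinuousLinearMap).comp Q‖ ≤ δ)
    (hE : wstarBSCSP E) : wstarBSCSP Z := by
  intro ε hε
  obtain ⟨n, e, α, lam, he, hα, hlam₀, hlam₁, hdiam⟩ := hE (ε / 2) (by positivity)
  choose α' hα' hclose' using fun i => hclose (e i) (he i) (ε / 8) (by positivity)
  refine ⟨n, fun i => T (e i), fun i => min (α i) (α' i), lam,
    fun i => (T.norm_map _).trans (he i), fun i => lt_min (hα i) (hα' i), hlam₀, hlam₁, ?_⟩
  calc _ ≤ ε / 8 + diam (∑ i, lam i • wstarSlice E (e i) (α i)) + ε / 8 :=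
        diam_sum_smul_wstarSlice_le_s14 T hQ e α α' lam hlam₀ hlam₁ (by positivity) hclose'
    _ < ε := by linarith

theorem norm_comp_le_of_mem_wstarSlice (J : W →L[ℝ] Z) {u : Z} {s c : ℝ} (hs : 0 < s)
    (hc : 0 ≤ c) (hsmooth : ∀ w, ‖w‖ = 1 → ‖u + s • J w‖ ≤ 1 + c * s) {G : Z →L[ℝ] ℝ}
    (hG : G ∈ wstarSlice Z u (c * s)) : ‖G.comp J‖ ≤ 2 * c := by
  have hG₁ : ‖G‖ ≤ 1 := mem_closedBall_zero_iff.1 hG.1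
  -- `G` almost attains its norm at `u`, so it cannot grow much along `J w`
  have hside : ∀ w, ‖w‖ = 1 → s * G (J w) ≤ 2 * c * s := fun w hw => by
    have : G (u + s • J w) ≤ 1 + c * s :=
      (le_abs_self _).trans <| (G.le_of_opNorm_le hG₁ _).trans <|
        (one_mul _).trans_le (hsmooth w hw)
    rw [map_add, map_smul, smul_eq_mul] at this
    linarith [hG.2]
  refine ContinuousLinearMap.opNorm_le_of_unit_norm (by positivity) fun w hw => ?_
  have h₁ := hside w hw
  have h₂ := hside (-w) (by rwa [norm_neg])
  rw [map_neg, map_neg] at h₂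
  rw [ContinuousLinearMap.comp_apply, Real.norm_eq_abs, abs_le]
  constructor <;> nlinarith

theorem norm_sub_comp_comp_le_of_mem_wstarSlice (T : E →L[ℝ] Z) (Q : Z →L[ℝ] E) (J : W →L[ℝ] Z)
    {P : Z →L[ℝ] W} (hP : ‖P‖ ≤ 1) (hTQJP : ∀ z, T (Q z) + J (P z) = z) {u : Z} {s c : ℝ}
    (hs : 0 < s) (hc : 0 ≤ c) (hsmooth : ∀ w, ‖w‖ = 1 → ‖u + s • J w‖ ≤ 1 + c * s) {G : Z →L[ℝ] ℝ}
    (hG : G ∈ wstarSlice Z u (c * s)) : ‖G - (G.comp T).comp Q‖ ≤ 2 * c := by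
  have hdecomp : G - (G.comp T).comp Q = (G.comp J).comp P := by
    ext z
    have h := congrArg G (hTQJP z)
    rw [map_add] at h
    simp only [sub_apply, ContinuousLinearMap.comp_apply]
    linarith
  calc ‖G - (G.comp T).comp Q‖ = ‖(G.comp J).comp P‖ := by rw [hdecomp]
    _ ≤ ‖G.comp J‖ * ‖P‖ := ContinuousLinearMap.opNorm_comp_le _ _
    _ ≤ 2 * c * 1 := by
      gcongr
      exact norm_comp_le_of_mem_wstarSlice J hs hc hsmooth hG
    _ = 2 * c := mul_one _

end WstarSlices

namespace WithLp

section Norm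

variable {p : ℝ≥0∞} [Fact (1 ≤ p)] {X Y : Type*} [SeminormedAddCommGroup X]
  [SeminormedAddCommGroup Y]

theorem exists_norm_toLp_le_one_add (hp : 1 < p) {δ : ℝ} (hδ : 0 < δ) :
    ∃ s > 0, ∀ (x : X) (y : Y), ‖x‖ ≤ 1 → ‖y‖ ≤ s → ‖toLp p (x, y)‖ ≤ 1 + δ * s := by
  rcases eq_or_ne p ∞ with rfl | hp_top
  · refine ⟨1, one_pos, fun x y hx hy => ?_⟩
    rw [prod_norm_eq_sup]
    exact (sup_le hx hy).trans (by linarith)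
  set q := p.toReal
  have hq : 1 < q := by simpa using (ENNReal.toReal_lt_toReal ENNReal.one_ne_top hp_top).2 hp
  set s := min 1 (δ ^ (q - 1)⁻¹)
  have hs : 0 < s := lt_min one_pos (by positivity)
  have hsq : s ^ q ≤ δ * s := calc
    s ^ q = s ^ (q - 1) * s := by rw [← Real.rpow_add_one hs.ne', sub_add_cancel]
    _ ≤ (δ ^ (q - 1)⁻¹) ^ (q - 1) * s := by gcongr; exact min_le_right _ _
    _ = δ * s := by rw [← Real.rpow_mul hδ.le, inv_mul_cancel₀ (by linarith), Real.rpow_one]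
  refine ⟨s, hs, fun x y hx hy => ?_⟩
  rw [prod_norm_eq_add (by linarith)]
  calc (‖(toLp p (x, y)).fst‖ ^ q + ‖(toLp p (x, y)).snd‖ ^ q) ^ (1 / q)
      ≤ (1 + s ^ q) ^ (1 / q) := by
        gcongr
        · exact Real.rpow_le_one (norm_nonneg x) hx (zero_le_one.trans hq.le)
        · exact hy
    _ ≤ 1 + s ^ q := Real.rpow_le_self_of_one_le (by simp; positivity) (by
        rw [div_le_one (by linarith)]; exact hq.le)
    _ ≤ 1 + δ * s := by linarith

theorem exists_norm_toLp_le_one_add' (hp : 1 < p) {δ : ℝ} (hδ : 0 < δ) :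
    ∃ s > 0, ∀ (x : X) (y : Y), ‖x‖ ≤ s → ‖y‖ ≤ 1 → ‖toLp p (x, y)‖ ≤ 1 + δ * s := by
  obtain ⟨s, hs, h⟩ := exists_norm_toLp_le_one_add (X := Y) (Y := X) hp hδ
  refine ⟨s, hs, fun x y hx hy => ?_⟩
  rw [← (IsometryEquiv.withLpProdComm p X Y).isometry.norm_map_of_map_zero rfl]
  exact h y x hy hx

end Norm

section LpProduct

variable {p : ℝ≥0∞} [Fact (1 ≤ p)] {X Y : Type*} [NormedAddCommGroup X] [NormedSpace ℝ X]
  [NormedAddCommGroup Y] [NormedSpace ℝ Y]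

variable (p X Y) in
def inlₗᵢ : X →ₗᵢ[ℝ] WithLp p (X × Y) where
  toFun x := toLp p (x, 0)
  map_add' x x' := by simp [← toLp_add]
  map_smul' c x := by simp [← toLp_smul]
  norm_map' := norm_toLp_fst p X Y

variable (p X Y) in
def inrₗᵢ : Y →ₗᵢ[ℝ] WithLp p (X × Y) where
  toFun y := toLp p (0, y)
  map_add' y y' := by simp [← toLp_add]
  map_smul' c y := by simp [← toLp_smul]
  norm_map' := norm_toLp_snd p X Y

theorem inlₗᵢ_add_inrₗᵢ (x : X) (y : Y) : inlₗᵢ p X Y x + inrₗᵢ p X Y y = toLp p (x, y) := by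
  simp only [inlₗᵢ, inrₗᵢ, LinearIsometry.coe_mk, LinearMap.coe_mk, AddHom.coe_mk, ← toLp_add,
    Prod.mk_add_mk, add_zero, zero_add]

theorem inlₗᵢ_fst_add_inrₗᵢ_snd (z : WithLp p (X × Y)) :
    inlₗᵢ p X Y z.fst + inrₗᵢ p X Y z.snd = z :=
  inlₗᵢ_add_inrₗᵢ z.fst z.snd

theorem norm_fstL_le : ‖fstL p ℝ X Y‖ ≤ 1 :=
  ContinuousLinearMap.opNorm_le_bound _ zero_le_one fun z => by simpa using norm_fst_le X z

theorem norm_sndL_le : ‖sndL p ℝ X Y‖ ≤ 1 :=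
  ContinuousLinearMap.opNorm_le_bound _ zero_le_one fun z => by simpa using norm_snd_le X z

theorem exists_wstarSlice_inlₗᵢ_norm_sub_comp_le (hp : 1 < p) (e : X) (he : ‖e‖ = 1)
    (δ : ℝ) (hδ : 0 < δ) : ∃ α > 0, ∀ G ∈ wstarSlice (WithLp p (X × Y)) (inlₗᵢ p X Y e) α,
      ‖G - (G.comp (inlₗᵢ p X Y).toContinuousLinearMap).comp (fstL p ℝ X Y)‖ ≤ δ := by
  obtain ⟨s, hs, hnorm⟩ := exists_norm_toLp_le_one_add (X := X) (Y := Y) hp (half_pos hδ)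
  refine ⟨δ / 2 * s, by positivity, fun G hG => ?_⟩
  have hdecomp (z : WithLp p (X × Y)) : (inlₗᵢ p X Y).toContinuousLinearMap (fstL p ℝ X Y z) +
      (inrₗᵢ p X Y).toContinuousLinearMap (sndL p ℝ X Y z) = z :=
    inlₗᵢ_fst_add_inrₗᵢ_snd z
  have hsmooth (w : Y) (hw : ‖w‖ = 1) :
      ‖inlₗᵢ p X Y e + s • (inrₗᵢ p X Y).toContinuousLinearMap w‖ ≤ 1 + δ / 2 * s := by
    rw [LinearIsometry.coe_toContinuousLinearMap, ← map_smul, inlₗᵢ_add_inrₗᵢ]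
    exact hnorm e (s • w) he.le (by rw [norm_smul, hw, Real.norm_of_nonneg hs.le, mul_one])
  have := norm_sub_comp_comp_le_of_mem_wstarSlice (inlₗᵢ p X Y).toContinuousLinearMap
    (fstL p ℝ X Y) (inrₗᵢ p X Y).toContinuousLinearMap norm_sndL_le hdecomp hs (half_pos hδ).le
    hsmooth hG
  linarith

theorem exists_wstarSlice_inrₗᵢ_norm_sub_comp_le (hp : 1 < p) (e : Y) (he : ‖e‖ = 1)
    (δ : ℝ) (hδ : 0 < δ) : ∃ α > 0, ∀ G ∈ wstarSlice (WithLp p (X × Y)) (inrₗᵢ p X Y e) α,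
      ‖G - (G.comp (inrₗᵢ p X Y).toContinuousLinearMap).comp (sndL p ℝ X Y)‖ ≤ δ := by
  obtain ⟨s, hs, hnorm⟩ := exists_norm_toLp_le_one_add' (X := X) (Y := Y) hp (half_pos hδ)
  refine ⟨δ / 2 * s, by positivity, fun G hG => ?_⟩
  have hdecomp (z : WithLp p (X × Y)) : (inrₗᵢ p X Y).toContinuousLinearMap (sndL p ℝ X Y z) +
      (inlₗᵢ p X Y).toContinuousLinearMap (fstL p ℝ X Y z) = z :=
    (add_comm _ _).trans (inlₗᵢ_fst_add_inrₗᵢ_snd z)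
  have hsmooth (w : X) (hw : ‖w‖ = 1) :
      ‖inrₗᵢ p X Y e + s • (inlₗᵢ p X Y).toContinuousLinearMap w‖ ≤ 1 + δ / 2 * s := by
    rw [LinearIsometry.coe_toContinuousLinearMap, ← map_smul, add_comm, inlₗᵢ_add_inrₗᵢ]
    exact hnorm (s • w) e (by rw [norm_smul, hw, Real.norm_of_nonneg hs.le, mul_one]) he.le
  have := norm_sub_comp_comp_le_of_mem_wstarSlice (inrₗᵢ p X Y).toContinuousLinearMap
    (sndL p ℝ X Y) (inlₗᵢ p X Y).toContinuousLinearMap norm_fstL_le hdecomp hs (half_pos hδ).le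
    hsmooth hG
  linarith

end LpProduct

end WithLp

theorem statement14_general (X Y : Type*) [NormedAddCommGroup X] [NormedSpace ℝ X]
    [NormedAddCommGroup Y] [NormedSpace ℝ Y]
    (p : ℝ≥0∞) [Fact (1 ≤ p)] (hp : 1 < p) (h : wstarBSCSP X ∨ wstarBSCSP Y) :
    wstarBSCSP (WithLp p (X × Y)) := by
  rcases h with hX | hY
  · exact wstarBSCSP_of_forall_wstarSlice_norm_sub_comp_le (WithLp.inlₗᵢ p X Y)
      (WithLp.fstL p ℝ X Y) WithLp.norm_fstL_le
      (WithLp.exists_wstarSlice_inlₗᵢ_norm_sub_comp_le hp) hX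
  · exact wstarBSCSP_of_forall_wstarSlice_norm_sub_comp_le (WithLp.inrₗᵢ p X Y)
      (WithLp.sndL p ℝ X Y) WithLp.norm_sndL_le
      (WithLp.exists_wstarSlice_inrₗᵢ_norm_sub_comp_le hp) hY

/-- For `Z = X ⊕_p Y` (`1 < p ≤ ∞`), if `X*` or `Y*` has `w*-BSCSP` then `Z*` has
`w*-BSCSP`. -/
theorem statement14 (X Y : Type*) [NormedAddCommGroup X] [NormedSpace ℝ X] [CompleteSpace X]
    [NormedAddCommGroup Y] [NormedSpace ℝ Y] [CompleteSpace Y]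
    (p : ℝ≥0∞) [Fact (1 ≤ p)] (hp : 1 < p) (h : wstarBSCSP X ∨ wstarBSCSP Y) :
    wstarBSCSP (WithLp p (X × Y)) :=
  statement14_general X Y p hp h
end
end

section
/- Let X and Y be real Banach spaces and Z = X ⊕_1 Y (the product X × Y with norm ‖(x,y)‖ = ‖x‖ + ‖y‖). If the dual Z* has the w*-Ball Huskable Property (w*-BHP), then both X* and Y* have w*-BHP. -/
open Metric Topology Pointwise ENNReal

noncomputable section

/-!
If `J : E → F` embeds `E` as an L-summand of `F` with projection `P`, i.e.
`‖z‖ ≥ ‖z - J (P z)‖ + ‖P z‖`, then for a fixed `g ∈ B_{F*}` the map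
`f ↦ g ∘ (1 - J P) + f ∘ P` keeps the complementary part of `g` and replaces its `E`-part
by `f`.
It is weak*-continuous and affine, sends `B_{E*}` into `B_{F*}`, does not decrease distances,
and sends `g ∘ J` back to `g`. Pulling back a small relatively weak*-open subset of `B_{F*}`
containing `g` therefore gives one of `B_{E*}` containing `g ∘ J`. Both `X` and `Y` are
L-summands of `X ⊕₁ Y`.
-/

section WeakStar

variable {E F : Type*} [NormedAddCommGroup E] [NormedSpace ℝ E]
  [NormedAddCommGroup F] [NormedSpace ℝ F]

lemma continuous_wstarTop_iff {α : Type*} {t : TopologicalSpace α}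
    {φ : α → (E →L[ℝ] ℝ)} :
    Continuous[t, wstarTop E] φ ↔ ∀ e : E, Continuous[t, _] fun a => φ a e := by
  rw [wstarTop, continuous_iInf_rng]
  simp only [continuous_induced_rng]
  rfl

lemma continuous_wstarTop_eval (e : E) :
    Continuous[wstarTop E, _] fun f : E →L[ℝ] ℝ => f e :=
  continuous_iInf_dom continuous_induced_dom

variable (J : E →L[ℝ] F) (P : F →L[ℝ] E)

def replaceOnSummand (g : F →L[ℝ] ℝ) (f : E →L[ℝ] ℝ) : F →L[ℝ] ℝ :=
  g.comp (ContinuousLinearMap.id ℝ F - J.comp P) + f.comp P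

variable {J P}

lemma replaceOnSummand_apply (g : F →L[ℝ] ℝ) (f : E →L[ℝ] ℝ) (z : F) :
    replaceOnSummand J P g f z = g (z - J (P z)) + f (P z) :=
  rfl

lemma replaceOnSummand_comp_self (g : F →L[ℝ] ℝ) : replaceOnSummand J P g (g.comp J) = g := by
  ext z
  simp [replaceOnSummand_apply]

lemma norm_replaceOnSummand_le_one (hnorm : ∀ z, ‖z - J (P z)‖ + ‖P z‖ ≤ ‖z‖)
    {g : F →L[ℝ] ℝ} {f : E →L[ℝ] ℝ} (hg : ‖g‖ ≤ 1) (hf : ‖f‖ ≤ 1) :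
    ‖replaceOnSummand J P g f‖ ≤ 1 := by
  refine ContinuousLinearMap.opNorm_le_bound _ zero_le_one fun z => ?_
  calc ‖g (z - J (P z)) + f (P z)‖
      ≤ ‖g‖ * ‖z - J (P z)‖ + ‖f‖ * ‖P z‖ :=
        (norm_add_le _ _).trans (add_le_add (g.le_opNorm _) (f.le_opNorm _))
    _ ≤ 1 * ‖z - J (P z)‖ + 1 * ‖P z‖ := by gcongr
    _ ≤ 1 * ‖z‖ := by simpa using hnorm z

lemma dist_le_dist_replaceOnSummand (hPJ : ∀ x, P (J x) = x) (hJ : ‖J‖ ≤ 1)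
    (g : F →L[ℝ] ℝ) (f₁ f₂ : E →L[ℝ] ℝ) :
    dist f₁ f₂ ≤ dist (replaceOnSummand J P g f₁) (replaceOnSummand J P g f₂) := by
  have hsub : replaceOnSummand J P g f₁ - replaceOnSummand J P g f₂ = (f₁ - f₂).comp P := by
    ext z
    simp [replaceOnSummand_apply]
  have hrestrict : f₁ - f₂ = ((f₁ - f₂).comp P).comp J := by
    ext x
    simp [hPJ]
  rw [dist_eq_norm, dist_eq_norm, hsub, hrestrict]
  calc ‖((f₁ - f₂).comp P).comp J‖ ≤ ‖(f₁ - f₂).comp P‖ * ‖J‖ :=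
        ContinuousLinearMap.opNorm_comp_le _ _
    _ ≤ ‖(f₁ - f₂).comp P‖ * 1 := by gcongr
    _ = ‖(((f₁ - f₂).comp P).comp J).comp P‖ := by rw [mul_one, ← hrestrict]

lemma continuous_replaceOnSummand (g : F →L[ℝ] ℝ) :
    Continuous[wstarTop E, wstarTop F] (replaceOnSummand J P g) :=
  continuous_wstarTop_iff.mpr fun z => by
    -- the domain must carry the weak* topology, not the norm topology of `E →L[ℝ] ℝ`
    let _ := wstarTop E
    exact (continuous_wstarTop_eval (P z)).const_add (g (z - J (P z)))

theorem wstarBHP_of_isLSummand (hPJ : ∀ x, P (J x) = x) (hJ : ‖J‖ ≤ 1)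
    (hnorm : ∀ z, ‖z - J (P z)‖ + ‖P z‖ ≤ ‖z‖) (h : wstarBHP F) : wstarBHP E := by
  intro ε hε
  obtain ⟨V, hV, ⟨g, hgV, hg⟩, hdiam⟩ := h ε hε
  rw [mem_closedBall_zero_iff] at hg
  set Φ := replaceOnSummand J P g
  have hball : Set.MapsTo Φ (closedBall 0 1) (closedBall 0 1) := fun f hf =>
    mem_closedBall_zero_iff.mpr
      (norm_replaceOnSummand_le_one hnorm hg (mem_closedBall_zero_iff.mp hf))
  refine ⟨Φ ⁻¹' V, @Continuous.isOpen_preimage _ _ (wstarTop E) (wstarTop F) _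
    (continuous_replaceOnSummand g) V hV, ⟨g.comp J, ?_, ?_⟩, ?_⟩
  · simpa [Φ, replaceOnSummand_comp_self] using hgV
  · rw [mem_closedBall_zero_iff]
    calc ‖g.comp J‖ ≤ ‖g‖ * ‖J‖ := ContinuousLinearMap.opNorm_comp_le _ _
      _ ≤ 1 * 1 := by gcongr
      _ = 1 := one_mul 1
  · refine (diam_le_of_forall_dist_le diam_nonneg fun f₁ hf₁ f₂ hf₂ => ?_).trans_lt hdiam
    exact (dist_le_dist_replaceOnSummand hPJ hJ g f₁ f₂).trans
      (dist_le_diam_of_mem (isBounded_closedBall.subset Set.inter_subset_right)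
        ⟨hf₁.1, hball hf₁.2⟩ ⟨hf₂.1, hball hf₂.2⟩)

end WeakStar

section L1Sum

variable (X Y : Type*) [NormedAddCommGroup X] [NormedSpace ℝ X]
  [NormedAddCommGroup Y] [NormedSpace ℝ Y]

theorem wstarBHP_left_of_wstarBHP_prod_L1 (h : wstarBHP (WithLp 1 (X × Y))) : wstarBHP X := by
  refine wstarBHP_of_isLSummand
    (J := (WithLp.prodContinuousLinearEquiv 1 ℝ X Y).symm.toContinuousLinearMap.comp
      (ContinuousLinearMap.inl ℝ X Y))
    (P := WithLp.fstL 1 ℝ X Y) (fun x => rfl) ?_ (fun z => ?_) h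
  · refine ContinuousLinearMap.opNorm_le_bound _ zero_le_one fun x => ?_
    simp [WithLp.norm_toLp_fst]
  · simp [WithLp.prod_norm_eq_of_L1 z, WithLp.prod_norm_eq_of_L1 (z - _), add_comm]

theorem wstarBHP_right_of_wstarBHP_prod_L1 (h : wstarBHP (WithLp 1 (X × Y))) : wstarBHP Y := by
  refine wstarBHP_of_isLSummand
    (J := (WithLp.prodContinuousLinearEquiv 1 ℝ X Y).symm.toContinuousLinearMap.comp
      (ContinuousLinearMap.inr ℝ X Y))
    (P := WithLp.sndL 1 ℝ X Y) (fun y => rfl) ?_ (fun z => ?_) h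
  · refine ContinuousLinearMap.opNorm_le_bound _ zero_le_one fun y => ?_
    simp [WithLp.norm_toLp_snd]
  · simp [WithLp.prod_norm_eq_of_L1 z, WithLp.prod_norm_eq_of_L1 (z - _)]

end L1Sum

theorem statement15_general (X Y : Type*) [NormedAddCommGroup X] [NormedSpace ℝ X]
    [NormedAddCommGroup Y] [NormedSpace ℝ Y]
    (h : wstarBHP (WithLp 1 (X × Y))) :
    wstarBHP X ∧ wstarBHP Y :=
  ⟨wstarBHP_left_of_wstarBHP_prod_L1 X Y h, wstarBHP_right_of_wstarBHP_prod_L1 X Y h⟩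

/-- If `Z = X ⊕_1 Y` is such that `Z*` has `w*-BHP`, then both `X*` and `Y*` have
`w*-BHP`. -/
theorem statement15 (X Y : Type*) [NormedAddCommGroup X] [NormedSpace ℝ X] [CompleteSpace X]
    [NormedAddCommGroup Y] [NormedSpace ℝ Y] [CompleteSpace Y]
    (h : wstarBHP (WithLp 1 (X × Y))) :
    wstarBHP X ∧ wstarBHP Y :=
  statement15_general X Y h
end
end
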